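/- For the softmax parameterization $\pi_\theta(x)=\exp(\theta_x)/\sum_{x'}\exp(\theta_{x'})$ over a finite set $X$, and any unit vector $u\in\mathbb{R}^X$, defining $\pi^\alpha := \pi_{\theta+\alpha u}$, one has $\sum_{x}\left|\frac{d\pi^\alpha(x)}{d\alpha}\Big|_{\alpha=0}\right| \le 2$ and $\sum_{x}\left|\frac{d^2\pi^\alpha(x)}{(d\alpha)^2}\Big|_{\alpha=0}\right| \le 6$. -/

import Mathlib

/-- Softmax distribution over a finite set. -/
noncomputable def softmax {X : Type*} [Fintype X] (θ : X → ℝ) (x : X) : ℝ :=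
  Real.exp (θ x) / ∑ x', Real.exp (θ x')

section Aux

variable {X : Type*} [Fintype X] [Nonempty X]

lemma Spos (θ u : X → ℝ) (α : ℝ) : 0 < ∑ y, Real.exp (θ y + α * u y) :=
  Finset.sum_pos (fun y _ => Real.exp_pos _) Finset.univ_nonempty

lemma key (θ u : X → ℝ) (x : X) (α : ℝ) :
    HasDerivAt (fun β : ℝ => softmax (θ + β • u) x)
      (softmax (θ + α • u) x * (u x - ∑ y, u y * softmax (θ + α • u) y)) α := by
  have hE : ∀ y, HasDerivAt (fun β : ℝ => Real.exp (θ y + β * u y))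
      (Real.exp (θ y + α * u y) * (1 * u y)) α :=
    fun y => (((hasDerivAt_id α).mul_const (u y)).const_add (θ y)).exp
  have hS : HasDerivAt (fun β : ℝ => ∑ y, Real.exp (θ y + β * u y))
      (∑ y, Real.exp (θ y + α * u y) * (1 * u y)) α :=
    HasDerivAt.fun_sum fun y _ => hE y
  have h2 : (fun β : ℝ => softmax (θ + β • u) x)
      = fun β => Real.exp (θ x + β * u x) / ∑ y, Real.exp (θ y + β * u y) := by
    funext β; simp [softmax, Pi.add_apply, Pi.smul_apply, smul_eq_mul]
  rw [h2]
  have h3 := (hE x).fun_div hS (ne_of_gt (Spos θ u α))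
  refine h3.congr_deriv (Eq.symm ?_)
  have hSne := ne_of_gt (Spos θ u α)
  simp only [softmax, Pi.add_apply, Pi.smul_apply, smul_eq_mul]
  have h4 : ∑ y, u y * (Real.exp (θ y + α * u y) / ∑ z, Real.exp (θ z + α * u z))
      = (∑ y, Real.exp (θ y + α * u y) * (1 * u y)) / ∑ z, Real.exp (θ z + α * u z) := by
    rw [Finset.sum_div]; exact Finset.sum_congr rfl fun y _ => by ring
  rw [h4]
  field_simp

lemma derivEq (θ u : X → ℝ) (x : X) :
    deriv (fun β : ℝ => softmax (θ + β • u) x)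
      = fun α => softmax (θ + α • u) x * (u x - ∑ y, u y * softmax (θ + α • u) y) := by
  funext α; exact (key θ u x α).deriv

lemma key2 (θ u : X → ℝ) (x : X) (α : ℝ) :
    HasDerivAt (deriv (fun β : ℝ => softmax (θ + β • u) x))
      ((softmax (θ + α • u) x * (u x - ∑ y, u y * softmax (θ + α • u) y))
          * (u x - ∑ y, u y * softmax (θ + α • u) y)
        + softmax (θ + α • u) x
          * (0 - ∑ y, u y * (softmax (θ + α • u) y
              * (u y - ∑ z, u z * softmax (θ + α • u) z)))) α := by
  rw [derivEq]
  have hm : HasDerivAt (fun β : ℝ => ∑ y, u y * softmax (θ + β • u) y)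
      (∑ y, u y * (softmax (θ + α • u) y * (u y - ∑ z, u z * softmax (θ + α • u) z))) α :=
    HasDerivAt.fun_sum fun y _ => (key θ u y α).const_mul (u y)
  exact (key θ u x α).mul ((hasDerivAt_const α (u x)).sub hm)

end Aux

theorem softmax_directional_deriv_sums
    {X : Type*} [Fintype X] [Nonempty X]
    (θ u : X → ℝ) (hu : ∑ x, u x ^ 2 = 1) :
    (∑ x, |deriv (fun α : ℝ => softmax (θ + α • u) x) 0| ≤ 2) ∧
    (∑ x, |deriv (deriv fun α : ℝ => softmax (θ + α • u) x) 0| ≤ 6) := by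
  have h0 : θ + (0:ℝ) • u = θ := by simp
  set p : X → ℝ := softmax θ with hp
  have hppos : ∀ y, 0 < p y := fun y =>
    div_pos (Real.exp_pos _) (Finset.sum_pos (fun _ _ => Real.exp_pos _) Finset.univ_nonempty)
  have hpsum : ∑ y, p y = 1 := by
    rw [hp]
    simp only [softmax, ← Finset.sum_div]
    exact div_self (ne_of_gt (Finset.sum_pos (fun _ _ => Real.exp_pos _) Finset.univ_nonempty))
  have hub : ∀ x, |u x| ≤ 1 := by
    intro x
    have h1 : u x ^ 2 ≤ 1 := by
      rw [← hu]
      exact Finset.single_le_sum (fun y _ => sq_nonneg (u y)) (Finset.mem_univ x)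
    rw [abs_le]; constructor <;> nlinarith
  set m : ℝ := ∑ y, u y * p y with hm
  have hmb : |m| ≤ 1 := by
    calc |m| ≤ ∑ y, |u y * p y| := Finset.abs_sum_le_sum_abs _ _
      _ ≤ ∑ y, p y := Finset.sum_le_sum fun y _ => by
          rw [abs_mul, abs_of_pos (hppos y)]
          calc |u y| * p y ≤ 1 * p y := by
                exact mul_le_mul_of_nonneg_right (hub y) (le_of_lt (hppos y))
            _ = p y := one_mul _
      _ = 1 := hpsum
  have hdiff : ∀ x, |u x - m| ≤ 2 := fun x =>
    calc |u x - m| ≤ |u x| + |m| := abs_sub _ _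
      _ ≤ 1 + 1 := add_le_add (hub x) hmb
      _ = 2 := by norm_num
  have hd1 : ∀ x, deriv (fun α : ℝ => softmax (θ + α • u) x) 0 = p x * (u x - m) := by
    intro x
    rw [(key θ u x 0).deriv, h0, hp, hm]
  set V : ℝ := ∑ y, u y * (p y * (u y - m)) with hV
  have hVb : |V| ≤ 2 := by
    calc |V| ≤ ∑ y, |u y * (p y * (u y - m))| := Finset.abs_sum_le_sum_abs _ _
      _ ≤ ∑ y, p y * 2 := Finset.sum_le_sum fun y _ => by
          rw [abs_mul, abs_mul, abs_of_pos (hppos y)]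
          calc |u y| * (p y * |u y - m|) ≤ 1 * (p y * 2) := by
                apply mul_le_mul (hub y) _ (mul_nonneg (le_of_lt (hppos y)) (abs_nonneg _)) zero_le_one
                exact mul_le_mul_of_nonneg_left (hdiff y) (le_of_lt (hppos y))
            _ = p y * 2 := one_mul _
      _ = 2 := by rw [← Finset.sum_mul, hpsum, one_mul]
  have hd2 : ∀ x, deriv (deriv fun α : ℝ => softmax (θ + α • u) x) 0
      = (p x * (u x - m)) * (u x - m) + p x * (0 - V) := by
    intro x
    have := (key2 θ u x 0).deriv
    rw [h0] at this
    rw [this, hp, hm, hV]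
  constructor
  · calc ∑ x, |deriv (fun α : ℝ => softmax (θ + α • u) x) 0|
        = ∑ x, p x * |u x - m| := by
          refine Finset.sum_congr rfl fun x _ => ?_
          rw [hd1 x, abs_mul, abs_of_pos (hppos x)]
      _ ≤ ∑ x, p x * 2 := Finset.sum_le_sum fun x _ =>
          mul_le_mul_of_nonneg_left (hdiff x) (le_of_lt (hppos x))
      _ = 2 := by rw [← Finset.sum_mul, hpsum, one_mul]
  · calc ∑ x, |deriv (deriv fun α : ℝ => softmax (θ + α • u) x) 0|
        ≤ ∑ x, p x * 6 := Finset.sum_le_sum fun x _ => by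
          rw [hd2 x]
          have h1 : |(p x * (u x - m)) * (u x - m)| ≤ p x * 4 := by
            rw [abs_mul, abs_mul, abs_of_pos (hppos x), mul_assoc]
            have h4 : |u x - m| * |u x - m| ≤ 4 := by
              have := hdiff x; nlinarith [abs_nonneg (u x - m)]
            exact mul_le_mul_of_nonneg_left h4 (le_of_lt (hppos x))
          have h2 : |p x * (0 - V)| ≤ p x * 2 := by
            rw [abs_mul, abs_of_pos (hppos x), zero_sub, abs_neg]
            exact mul_le_mul_of_nonneg_left hVb (le_of_lt (hppos x))
          calc |(p x * (u x - m)) * (u x - m) + p x * (0 - V)|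
              ≤ |(p x * (u x - m)) * (u x - m)| + |p x * (0 - V)| := abs_add_le _ _
            _ ≤ p x * 4 + p x * 2 := add_le_add h1 h2
            _ = p x * 6 := by ring
      _ = 6 := by rw [← Finset.sum_mul, hpsum, one_mul]
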